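/- arXiv:2010.03545 — 4 statements merged into one kernel-verified Lean document; each statement's English description precedes it below -/
import Mathlib

section
/- Let (V, h) be a finite-dimensional complex inner product space of complex dimension n ≥ 1. For every h-self-adjoint ℂ-linear endomorphism f of V, writing ω_f(x,y) := ω(f x, y), one has n • (ω_f ∧ ω^{n-1}) = (tr f) • ω^n, where tr f is the (real-valued) trace of f as a ℂ-linear endomorphism. In particular, ω_f ∧ ω^{n-1} = 0 if and only if tr f = 0. -/
open scoped TensorProduct

/-- The wedge product of two real-valued alternating forms. -/
noncomputable def wedge {V : Type*} [AddCommGroup V] [Module ℝ V] {k l : ℕ}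
    (α : V [⋀^Fin k]→ₗ[ℝ] ℝ) (β : V [⋀^Fin l]→ₗ[ℝ] ℝ) :
    V [⋀^Fin (k + l)]→ₗ[ℝ] ℝ :=
  ((TensorProduct.lid ℝ ℝ).toLinearMap.compAlternatingMap
    (AlternatingMap.domCoprod α β)).domDomCongr finSumFinEquiv

/-- The `k`-th wedge power of a real-valued alternating 2-form. -/
noncomputable def wpow {V : Type*} [AddCommGroup V] [Module ℝ V]
    (ω : V [⋀^Fin 2]→ₗ[ℝ] ℝ) : (k : ℕ) → V [⋀^Fin (2 * k)]→ₗ[ℝ] ℝ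
  | 0 => (AlternatingMap.constOfIsEmpty ℝ V (Fin 0) 1).domDomCongr (finCongr (by ring))
  | k + 1 => (wedge ω (wpow ω k)).domDomCongr (finCongr (by ring))

/-!
Diagonalise `f` in an orthonormal eigenbasis `e` with eigenvalues `μᵢ`. On the real basis
`e₀, i e₀, e₁, i e₁, …` the form `ω` is in Darboux normal form, and `ω_f` pairs only `eᵢ` with
`i eᵢ`, with weight `μᵢ`. Expanding a wedge product `α ∧ β` of a 2-form `α` along the pairs of
such a basis gives `ω^k = k!` and `ω_f ∧ ω^{n-1} = (n-1)! ∑ μᵢ = (n-1)! tr f` on this basis, and a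
top-degree form is determined by its value on a single basis.
-/

open Equiv
open scoped Nat

theorem Equiv.Perm.ModSumCongr.mk_eq_mk_iff {ιa ιb : Type*} [Finite ιa] [Finite ιb]
    (σ τ : Perm (ιa ⊕ ιb)) :
    (σ : Perm.ModSumCongr ιa ιb) = τ ↔ ∀ i, ∃ j, τ (Sum.inl i) = σ (Sum.inl j) := by
  rw [QuotientGroup.eq]
  constructor
  · rintro ⟨⟨sl, sr⟩, h⟩ i
    refine ⟨sl i, ?_⟩
    rw [← mul_inv_cancel_left σ τ, ← h]
    simp
  · intro h
    apply Perm.mem_sumCongrHom_range_of_perm_mapsTo_inl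
    rintro _ ⟨i, rfl⟩
    obtain ⟨j, hj⟩ := h i
    exact ⟨j, by simp [hj]⟩

theorem AlternatingMap.domCoprod_apply_eq_sum {ιa ιb : Type*} [Fintype ιa] [Fintype ιb]
    [DecidableEq ιa] [DecidableEq ιb] {R Mᵢ N₁ N₂ : Type*} [CommSemiring R] [AddCommGroup N₁]
    [Module R N₁] [AddCommGroup N₂] [Module R N₂] [AddCommMonoid Mᵢ] [Module R Mᵢ]
    {P : Type*} [Fintype P]
    (a : Mᵢ [⋀^ιa]→ₗ[R] N₁) (b : Mᵢ [⋀^ιb]→ₗ[R] N₂) (v : ιa ⊕ ιb → Mᵢ)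
    (ρ : P → Perm (ιa ⊕ ιb)) (hρ : Function.Injective fun r => (ρ r : Perm.ModSumCongr ιa ιb))
    (ha : ∀ σ : Perm (ιa ⊕ ιb), a (fun i => v (σ (Sum.inl i))) ≠ 0 →
      ∃ r, (σ : Perm.ModSumCongr ιa ιb) = ρ r) :
    a.domCoprod b v = ∑ r, Perm.sign (ρ r) •
      (a (fun i => v (ρ r (Sum.inl i))) ⊗ₜ b (fun j => v (ρ r (Sum.inr j)))) := by
  rw [domCoprod_apply, sum_apply]
  refine (Fintype.sum_of_injective _ hρ _ _ (fun q hq => ?_) fun r => rfl).symm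
  induction q using Quotient.inductionOn' with | _ σ
  rw [domCoprod.summand_mk'', _root_.smul_apply, MultilinearMap.domDomCongr_apply,
    MultilinearMap.domCoprod_apply]
  by_cases hσ : a (fun i => v (σ (Sum.inl i))) = 0
  · simp [hσ]
  · obtain ⟨r, hr⟩ := ha σ hσ
    exact absurd ⟨r, hr.symm⟩ hq

theorem AlternatingMap.apply_fin_two {R M N : Type*} [Semiring R] [AddCommMonoid M] [Module R M]
    [AddCommMonoid N] [Module R N] (α : M [⋀^Fin 2]→ₗ[R] N) (u : Fin 2 → M) :
    α u = α ![u 0, u 1] := by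
  conv_lhs => rw [← FinVec.etaExpand_eq u]
  rfl

def pairSwap {k : ℕ} (r : Fin (k + 1)) : Perm (Fin (2 + 2 * k)) :=
  swap ⟨0, by omega⟩ ⟨2 * (r : ℕ), by omega⟩ * swap ⟨1, by omega⟩ ⟨2 * (r : ℕ) + 1, by omega⟩

theorem val_pairSwap {k : ℕ} (r : Fin (k + 1)) (p : Fin (2 + 2 * k)) :
    (pairSwap r p : ℕ) =
      if (p : ℕ) / 2 = 0 then 2 * (r : ℕ) + p % 2 else if (p : ℕ) / 2 = r then p % 2 else p := by
  simp only [pairSwap, Perm.mul_apply, swap_apply_def, Fin.ext_iff, apply_ite Fin.val]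
  split_ifs <;> first | contradiction | omega

theorem val_pairSwap_castAdd {k : ℕ} (r : Fin (k + 1)) (i : Fin 2) :
    (pairSwap r (Fin.castAdd _ i) : ℕ) = 2 * r + i := by
  rw [val_pairSwap, Fin.val_castAdd]
  split_ifs <;> omega

theorem sign_pairSwap {k : ℕ} (r : Fin (k + 1)) : Perm.sign (pairSwap r) = 1 := by
  rcases Nat.eq_zero_or_pos r with h | h
  · simp [pairSwap, h]
  · rw [pairSwap, map_mul, Perm.sign_swap (by simp only [ne_eq, Fin.ext_iff]; omega),
      Perm.sign_swap (by simp only [ne_eq, Fin.ext_iff]; omega)]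
    rfl

section Real

variable {V : Type*} [AddCommGroup V] [Module ℝ V]

theorem wedge_apply_eq_sum_pairSwap {k : ℕ} (α : V [⋀^Fin 2]→ₗ[ℝ] ℝ)
    (β : V [⋀^Fin (2 * k)]→ₗ[ℝ] ℝ) (v : Fin (2 + 2 * k) → V)
    (hα : ∀ a b : Fin (2 + 2 * k), (a : ℕ) / 2 ≠ (b : ℕ) / 2 → α ![v a, v b] = 0) :
    wedge α β v = ∑ r : Fin (k + 1),
      α ![v (pairSwap r (Fin.castAdd _ 0)), v (pairSwap r (Fin.castAdd _ 1))] *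
        β (fun t => v (pairSwap r (Fin.natAdd 2 t))) := by
  -- The cosets of `Perm (Fin 2) × Perm (Fin (2 * k))` on which `α` need not vanish are those
  -- sending the first two slots to a pair `{2r, 2r+1}`, represented by `pairSwap r`.
  let ρ : Fin (k + 1) → Perm (Fin 2 ⊕ Fin (2 * k)) := fun r =>
    finSumFinEquiv.symm.permCongr (pairSwap r)
  have hρ : Function.Injective fun r => (ρ r : Perm.ModSumCongr (Fin 2) (Fin (2 * k))) := by
    intro r s hrs
    obtain ⟨j, hj⟩ := (Perm.ModSumCongr.mk_eq_mk_iff _ _).mp hrs 0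
    have := congrArg (fun x => (finSumFinEquiv x : ℕ)) hj
    simp only [ρ, permCongr_apply, symm_symm, apply_symm_apply, finSumFinEquiv_apply_left,
      val_pairSwap_castAdd] at this
    ext
    omega
  have ha : ∀ σ : Perm (Fin 2 ⊕ Fin (2 * k)), α (fun i => v (finSumFinEquiv (σ (Sum.inl i)))) ≠ 0 →
      ∃ r, (σ : Perm.ModSumCongr (Fin 2) (Fin (2 * k))) = ρ r := by
    intro σ hσ
    rw [AlternatingMap.apply_fin_two] at hσ
    set a := finSumFinEquiv (σ (Sum.inl 0))
    set b := finSumFinEquiv (σ (Sum.inl 1))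
    have hab : (a : ℕ) / 2 = b / 2 := by
      by_contra h
      exact hσ (hα a b h)
    have hne : (a : ℕ) ≠ b := fun h => by simpa [a, b] using Fin.ext h
    refine ⟨⟨a / 2, by omega⟩, (Perm.ModSumCongr.mk_eq_mk_iff _ _).mpr fun i =>
      ⟨if (a : ℕ) % 2 = i then 0 else 1, finSumFinEquiv.injective ?_⟩⟩
    ext
    simp only [ρ, permCongr_apply, symm_symm, apply_symm_apply, finSumFinEquiv_apply_left,
      val_pairSwap_castAdd]
    split_ifs <;> simp only [a, b] at * <;> omega
  change TensorProduct.lid ℝ ℝ (α.domCoprod β (fun x => v (finSumFinEquiv x))) = _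
  rw [AlternatingMap.domCoprod_apply_eq_sum α β _ ρ hρ ha, map_sum]
  refine Finset.sum_congr rfl fun r _ => ?_
  simp [ρ, sign_pairSwap, AlternatingMap.apply_fin_two α]

/-- `v = (x₀, y₀, x₁, y₁, …)` with `ω (xᵢ, yᵢ) = 1` and `ω` vanishing on all other pairs
`(v a, v b)` with `a < b`. -/
def IsDarbouxTuple (ω : V [⋀^Fin 2]→ₗ[ℝ] ℝ) {m : ℕ} (v : Fin m → V) : Prop :=
  ∀ a b : Fin m, ω ![v a, v b] =
    if (a : ℕ) / 2 = b / 2 then (((b : ℕ) % 2 : ℕ) : ℝ) - ((a : ℕ) % 2 : ℕ) else 0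

namespace IsDarbouxTuple

variable {ω : V [⋀^Fin 2]→ₗ[ℝ] ℝ}

theorem comp {m m' : ℕ} {v : Fin m → V} (hv : IsDarbouxTuple ω v) (g : Fin m' → Fin m)
    (hmod : ∀ a, (g a : ℕ) % 2 = a % 2)
    (hdiv : ∀ a b, (g a : ℕ) / 2 = g b / 2 ↔ (a : ℕ) / 2 = b / 2) :
    IsDarbouxTuple ω (v ∘ g) := by
  intro a b
  simp only [Function.comp_apply, hv (g a) (g b), hmod, hdiv]

theorem comp_finCongr {m m' : ℕ} {v : Fin m → V} (hv : IsDarbouxTuple ω v) (h : m' = m) :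
    IsDarbouxTuple ω (v ∘ finCongr h) :=
  hv.comp _ (fun _ => rfl) fun _ _ => Iff.rfl

theorem comp_pairSwap_natAdd {k : ℕ} {v : Fin (2 + 2 * k) → V} (hv : IsDarbouxTuple ω v)
    (r : Fin (k + 1)) : IsDarbouxTuple ω (fun t => v (pairSwap r (Fin.natAdd 2 t))) :=
  hv.comp _ (fun a => by rw [val_pairSwap, Fin.val_natAdd]; split_ifs <;> omega)
    fun a b => by rw [val_pairSwap, val_pairSwap, Fin.val_natAdd, Fin.val_natAdd]; split_ifs <;> omega

theorem apply_pairSwap_castAdd {k : ℕ} {v : Fin (2 + 2 * k) → V} (hv : IsDarbouxTuple ω v)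
    (r : Fin (k + 1)) :
    ω ![v (pairSwap r (Fin.castAdd _ 0)), v (pairSwap r (Fin.castAdd _ 1))] = 1 := by
  rw [hv, val_pairSwap_castAdd, val_pairSwap_castAdd,
    if_pos (by simp only [Fin.isValue, Fin.val_zero, Fin.val_one]; omega)]
  norm_num

theorem wedge_apply {k : ℕ} {α : V [⋀^Fin 2]→ₗ[ℝ] ℝ} {β : V [⋀^Fin (2 * k)]→ₗ[ℝ] ℝ}
    {v : Fin (2 + 2 * k) → V} (hv : IsDarbouxTuple ω v) (c : ℕ → ℝ)
    (hα : ∀ a b, α ![v a, v b] = c ((a : ℕ) / 2) * ω ![v a, v b]) {B : ℝ}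
    (hβ : ∀ w, IsDarbouxTuple ω w → β w = B) :
    wedge α β v = (∑ r ∈ Finset.range (k + 1), c r) * B := by
  have hα₀ : ∀ a b : Fin (2 + 2 * k), (a : ℕ) / 2 ≠ b / 2 → α ![v a, v b] = 0 := fun a b h => by
    rw [hα, hv, if_neg h, mul_zero]
  rw [wedge_apply_eq_sum_pairSwap α β v hα₀, Finset.sum_mul, ← Fin.sum_univ_eq_sum_range]
  refine Finset.sum_congr rfl fun r _ => ?_
  rw [hβ _ (hv.comp_pairSwap_natAdd r), hα, hv.apply_pairSwap_castAdd, val_pairSwap_castAdd]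
  simp

theorem wpow_apply {k : ℕ} {v : Fin (2 * k) → V} (hv : IsDarbouxTuple ω v) :
    wpow ω k v = k ! := by
  induction k with
  | zero => simp [wpow]
  | succ k ih =>
    change wedge ω (wpow ω k) (v ∘ finCongr _) = _
    rw [(hv.comp_finCongr _).wedge_apply (fun _ => 1) (fun _ _ => (one_mul _).symm)
      fun w hw => ih hw]
    simp [Nat.factorial_succ]

end IsDarbouxTuple

end Real

section Complex

variable {V : Type*} [NormedAddCommGroup V] [InnerProductSpace ℂ V] {n : ℕ}

noncomputable def OrthonormalBasis.interleavedRealBasis (e : OrthonormalBasis (Fin n) ℂ V) :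
    Module.Basis (Fin (2 * n)) ℝ V :=
  (Complex.basisOneI.smulTower' e.toBasis).reindex
    (finProdFinEquiv.trans (finCongr (mul_comm n 2)))

theorem OrthonormalBasis.interleavedRealBasis_apply (e : OrthonormalBasis (Fin n) ℂ V)
    (t : Fin (2 * n)) :
    e.interleavedRealBasis t =
      (if (t : ℕ) % 2 = 0 then 1 else Complex.I) • e ⟨t / 2, by omega⟩ := by
  rw [interleavedRealBasis, Module.Basis.reindex_apply, Module.Basis.smulTower'_apply]
  simp only [Equiv.symm_trans_apply, finCongr_symm, finCongr_apply, finProdFinEquiv_symm_apply,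
    Complex.coe_basisOneI, OrthonormalBasis.coe_toBasis]
  congr 1
  rcases Nat.mod_two_eq_zero_or_one t with h | h <;> simp [Fin.modNat, h]

theorem OrthonormalBasis.isDarbouxTuple_interleavedRealBasis (e : OrthonormalBasis (Fin n) ℂ V)
    {ω : V [⋀^Fin 2]→ₗ[ℝ] ℝ} (hω : ∀ u v : V, ω ![u, v] = (inner ℂ (Complex.I • u) v : ℂ).re) :
    IsDarbouxTuple ω e.interleavedRealBasis := by
  intro a b
  rw [hω, interleavedRealBasis_apply, interleavedRealBasis_apply, smul_smul, inner_smul_left,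
    inner_smul_right, orthonormal_iff_ite.mp e.orthonormal]
  simp only [Fin.mk.injEq]
  rcases Nat.mod_two_eq_zero_or_one a with ha | ha <;>
    rcases Nat.mod_two_eq_zero_or_one b with hb | hb <;> split_ifs <;> simp_all

theorem OrthonormalBasis.apply_interleavedRealBasis_of_apply_eq_smul
    (e : OrthonormalBasis (Fin n) ℂ V) {f : V →ₗ[ℂ] V} {μ : Fin n → ℝ}
    (hf : ∀ i, f (e i) = (μ i : ℂ) • e i) (t : Fin (2 * n)) :
    f (e.interleavedRealBasis t) = (μ ⟨t / 2, by omega⟩ : ℂ) • e.interleavedRealBasis t := by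
  rw [interleavedRealBasis_apply, map_smul, hf, smul_comm]

theorem OrthonormalBasis.wedge_wpow_apply_interleavedRealBasis
    (e : OrthonormalBasis (Fin n) ℂ V) {ω ωf : V [⋀^Fin 2]→ₗ[ℝ] ℝ}
    (hω : ∀ u v : V, ω ![u, v] = (inner ℂ (Complex.I • u) v : ℂ).re)
    {f : V →ₗ[ℂ] V} (hωf : ∀ x y : V, ωf ![x, y] = (inner ℂ (Complex.I • f x) y : ℂ).re)
    {μ : Fin n → ℝ} (hf : ∀ i, f (e i) = (μ i : ℂ) • e i) {k : ℕ} (h : 2 + 2 * k = 2 * n) :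
    wedge ωf (wpow ω k) (e.interleavedRealBasis ∘ finCongr h) = (∑ i, μ i) * k ! := by
  have hb := (e.isDarbouxTuple_interleavedRealBasis hω).comp_finCongr h
  rw [hb.wedge_apply (fun i => if h : i < n then μ ⟨i, h⟩ else 0) ?_ fun w hw => hw.wpow_apply,
    show k + 1 = n by omega, Finset.sum_range]
  · simp
  · intro a a'
    have ha : (a : ℕ) / 2 < n := by omega
    rw [Function.comp_apply, Function.comp_apply, hωf, hω,
      e.apply_interleavedRealBasis_of_apply_eq_smul hf, smul_comm, inner_smul_left,
      Complex.conj_ofReal, Complex.re_ofReal_mul, dif_pos ha]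
    rfl

end Complex

/-- For a self-adjoint endomorphism `f` of a complex inner product space of dimension
`n ≥ 1`: its trace is real, `n • (ω_f ∧ ω^{n-1}) = (tr f) • ω^n`, and in particular
`ω_f ∧ ω^{n-1} = 0` iff `tr f = 0`. -/
theorem omega_f_wedge_pow {V : Type*} [NormedAddCommGroup V] [InnerProductSpace ℂ V]
    [FiniteDimensional ℂ V] {n : ℕ} (hn : 1 ≤ n) (hdim : Module.finrank ℂ V = n)
    (ω : V [⋀^Fin 2]→ₗ[ℝ] ℝ)
    (hω : ∀ u v : V, ω ![u, v] = (inner ℂ (Complex.I • u) v : ℂ).re)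
    (f : V →ₗ[ℂ] V) (hf : ∀ x y : V, (inner ℂ (f x) y : ℂ) = inner ℂ x (f y))
    (ωf : V [⋀^Fin 2]→ₗ[ℝ] ℝ)
    (hωf : ∀ x y : V, ωf ![x, y] = (inner ℂ (Complex.I • f x) y : ℂ).re) :
    (LinearMap.trace ℂ V f).im = 0 ∧
    (n : ℝ) • ((wedge ωf (wpow ω (n - 1))).domDomCongr
        (finCongr (by omega : 2 + 2 * (n - 1) = 2 * n)))
      = (LinearMap.trace ℂ V f).re • wpow ω n ∧
    (((wedge ωf (wpow ω (n - 1))).domDomCongr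
        (finCongr (by omega : 2 + 2 * (n - 1) = 2 * n))) = 0
      ↔ LinearMap.trace ℂ V f = 0) := by
  have hT : f.IsSymmetric := hf
  set e := hT.eigenvectorBasis hdim
  set μ := hT.eigenvalues hdim
  set b := e.interleavedRealBasis
  have htr : LinearMap.trace ℂ V f = ((∑ i, μ i : ℝ) : ℂ) := by
    rw [hT.trace_eq_sum_eigenvalues hdim]
    simp [μ]
  set X := (wedge ωf (wpow ω (n - 1))).domDomCongr
    (finCongr (by omega : 2 + 2 * (n - 1) = 2 * n))
  have hX : X b = (∑ i, μ i) * (n - 1)! :=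
    e.wedge_wpow_apply_interleavedRealBasis hω hωf (hT.apply_eigenvectorBasis hdim) _
  have hW : wpow ω n b = n ! := (e.isDarbouxTuple_interleavedRealBasis hω).wpow_apply
  have hmain : (n : ℝ) • X = (LinearMap.trace ℂ V f).re • wpow ω n := by
    rw [← sub_eq_zero, ← AlternatingMap.map_basis_eq_zero_iff b]
    simp only [AlternatingMap.sub_apply, AlternatingMap.smul_apply, hX, hW, htr, smul_eq_mul,
      Complex.ofReal_re]
    rw [← Nat.mul_factorial_pred (by omega : n ≠ 0)]
    push_cast
    ring
  refine ⟨by simp [htr], hmain, ?_⟩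
  rw [← AlternatingMap.map_basis_eq_zero_iff b, hX, htr, Complex.ofReal_eq_zero,
    mul_eq_zero_iff_right (by positivity)]
end

section
/- Let 𝔤 be a finite-dimensional real Lie algebra with Killing form B, and suppose 𝔤 = 𝔨 ⊕ 𝔭 is a direct sum of real subspaces with [𝔨,𝔨] ⊆ 𝔨, [𝔨,𝔭] ⊆ 𝔭, [𝔭,𝔭] ⊆ 𝔨, such that B is negative definite on 𝔨 and positive definite on 𝔭. If 𝔞 is a ℂ-linear subspace of 𝔭^ℂ ⊆ 𝔤^ℂ such that [X, Y] = 0 for all X, Y ∈ 𝔞, then dim_ℂ 𝔞 ≤ ½ dim_ℝ 𝔭. -/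
open scoped TensorProduct

/-!
Let `𝔟 = 𝔞 ∩ 𝔤` be the real points and `V = Re 𝔞` the real parts of `𝔞`. Then
`dim_ℝ 𝔞 = dim V + dim 𝔟`, both lie in `𝔭`, and `𝔟` is abelian and centralizes `V`.
For the inner product `-B(x, θ y)` the operators `ad b`, `b ∈ 𝔟`, are symmetric, commute and
anticommute with `θ`, so they are simultaneously diagonalizable. Since `ad` is injective on `𝔭`,
the joint eigenvalues span `𝔟*`; for `dim 𝔟` independent ones with eigenvectors `e k`, the
vectors `e k - θ e k ∈ 𝔭` are dual to the `e k`, whereas `V` is orthogonal to all of them.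
Hence `dim V + dim 𝔟 ≤ dim 𝔭`.
-/

open Module

namespace Module.End

variable {K E ι : Type*} [Field K] [AddCommGroup E] [Module K E]

def jointEigenspace (T : ι → End K E) (χ : ι → K) : Submodule K E :=
  ⨅ i, eigenspace (T i) (χ i)

lemma mem_jointEigenspace {T : ι → End K E} {χ : ι → K} {x : E} :
    x ∈ jointEigenspace T χ ↔ ∀ i, T i x = χ i • x := by
  simp [jointEigenspace]

lemma span_jointEigenvalues_eq_top [Fintype ι] {T : ι → End K E}
    (hT : LinearIndependent K T) (htop : ⨆ χ, jointEigenspace T χ = ⊤) :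
    Submodule.span K {χ | jointEigenspace T χ ≠ ⊥} = ⊤ := by
  classical
  set S := {χ | jointEigenspace T χ ≠ ⊥}
  by_contra hne
  obtain ⟨φ, hφ0, hφ⟩ :=
    Submodule.exists_dual_map_eq_bot_of_lt_top (lt_top_iff_ne_top.2 hne) inferInstance
  set t : ι → K := fun i ↦ φ fun j ↦ if i = j then 1 else 0
  have hφt (χ : ι → K) : φ χ = ∑ i, χ i * t i := by
    simp [t, LinearMap.pi_apply_eq_sum_univ φ χ]
  have hsum : ∑ i, t i • T i = 0 := by
    rw [← LinearMap.ker_eq_top, eq_top_iff, ← htop]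
    refine iSup_le fun χ x hx ↦ ?_
    by_cases hχ : χ ∈ S
    · have hφχ : φ χ = 0 := by
        have := Submodule.mem_map_of_mem (f := φ) (Submodule.subset_span (R := K) (s := S) hχ)
        rwa [hφ, Submodule.mem_bot] at this
      calc (∑ i, t i • T i) x = (∑ i, χ i * t i) • x := by
            simp [LinearMap.sum_apply, mem_jointEigenspace.1 hx, Finset.sum_smul, smul_smul,
              mul_comm]
        _ = 0 := by rw [← hφt, hφχ, zero_smul]
    · rw [show jointEigenspace T χ = ⊥ from not_not.1 hχ] at hx
      simp [(Submodule.mem_bot K).1 hx]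
  have ht : t = 0 := funext (Fintype.linearIndependent_iff.1 hT t hsum)
  exact hφ0 (LinearMap.ext fun χ ↦ by simp [hφt, ht])

lemma exists_basis_jointEigenvalues [Fintype ι] {T : ι → End K E}
    (hT : LinearIndependent K T) (htop : ⨆ χ, jointEigenspace T χ = ⊤) :
    ∃ b : Basis ι K (ι → K), ∀ k, jointEigenspace T (b k) ≠ ⊥ := by
  have hS := span_jointEigenvalues_eq_top hT htop
  set b := Basis.ofSpan hS.ge
  refine ⟨b.reindex (b.indexEquiv (Pi.basisFun K ι)), fun k ↦ ?_⟩
  rw [Basis.reindex_apply]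
  exact Basis.ofSpan_subset hS.ge ⟨_, rfl⟩

end Module.End

open Module.End

lemma LinearIndependent.add_ne_zero {K V ι : Type*} [Field K] [CharZero K] [AddCommGroup V]
    [Module K V] {v : ι → V} (hv : LinearIndependent K v) (i j : ι) : v i + v j ≠ 0 := by
  classical
  intro h
  rcases eq_or_ne i j with rfl | hij
  · rw [← two_smul K] at h
    exact hv.ne_zero i ((smul_eq_zero.1 h).resolve_left two_ne_zero)
  · have := linearIndependent_iff'.1 hv {i, j} 1 (by simpa [Finset.sum_pair hij] using h) i
      (by simp)
    simp at this

lemma Submodule.finrank_add_finrank_le_of_map_eq_top {K V W : Type*} [DivisionRing K]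
    [AddCommGroup V] [Module K V] [AddCommGroup W] [Module K W] [FiniteDimensional K V]
    (f : V →ₗ[K] W) {P U : Submodule K V} (hf : P.map f = ⊤) (hUP : U ≤ P)
    (hU : U ≤ LinearMap.ker f) : finrank K W + finrank K U ≤ finrank K P := by
  set g := f.domRestrict P
  have hg : LinearMap.range g = ⊤ := by rw [LinearMap.range_domRestrict, hf]
  have hUg : finrank K U ≤ finrank K (LinearMap.ker g) :=
    (Submodule.comapSubtypeEquivOfLe hUP).finrank_eq.symm.le.trans
      (Submodule.finrank_mono fun x hx ↦ hU hx)
  rw [← g.finrank_range_add_finrank_ker, hg, finrank_top]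
  omega

open RealInnerProductSpace in
theorem card_add_finrank_le_finrank_of_anticommute {E ι : Type*} [NormedAddCommGroup E]
    [InnerProductSpace ℝ E] [FiniteDimensional ℝ E] [Fintype ι] {T : ι → End ℝ E}
    (hsymm : ∀ i, (T i).IsSymmetric) (hcomm : Pairwise fun i j ↦ Commute (T i) (T j))
    (hind : LinearIndependent ℝ T) {θ : End ℝ E} (hθ : ∀ i x, T i (θ x) = -θ (T i x))
    {P V : Submodule ℝ E} (hP : ∀ x, x - θ x ∈ P) (hVP : V ≤ P)
    (hV : V ≤ jointEigenspace T 0) :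
    Fintype.card ι + finrank ℝ V ≤ finrank ℝ P := by
  classical
  obtain ⟨b, hb⟩ := exists_basis_jointEigenvalues hind
    (LinearMap.IsSymmetric.iSup_iInf_eq_top_of_commute hsymm hcomm)
  choose e he he0 using fun k ↦ Submodule.exists_mem_ne_zero_of_ne_bot (hb k)
  have horth {χ χ'} (h : χ ≠ χ') {x y} (hx : x ∈ jointEigenspace T χ)
      (hy : y ∈ jointEigenspace T χ') : ⟪x, y⟫ = 0 :=
    LinearMap.IsSymmetric.orthogonalFamily_iInf_eigenspaces hsymm h ⟨x, hx⟩ ⟨y, hy⟩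
  have hθe k : θ (e k) ∈ jointEigenspace T (-b k) := by
    refine mem_jointEigenspace.2 fun i ↦ ?_
    rw [hθ, mem_jointEigenspace.1 (he k) i, map_smul, Pi.neg_apply, neg_smul]
  have hdual k k' : ⟪e k', e k - θ (e k)⟫ = if k' = k then ‖e k‖ ^ 2 else 0 := by
    rw [inner_sub_right, horth (fun h ↦ b.linearIndependent.add_ne_zero k' k (by simp [h]))
      (he k') (hθe k), sub_zero]
    split_ifs with h
    · rw [h, real_inner_self_eq_norm_sq]
    · exact horth (b.injective.ne h) (he k') (he k)
  let Φ : E →ₗ[ℝ] ι → ℝ := LinearMap.pi fun k ↦ innerₛₗ ℝ (e k)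
  have hΦP : P.map Φ = ⊤ := by
    rw [eq_top_iff, ← (Pi.basisFun ℝ ι).span_eq, Submodule.span_le]
    rintro _ ⟨k, rfl⟩
    refine ⟨(‖e k‖ ^ 2)⁻¹ • (e k - θ (e k)), P.smul_mem _ (hP _), funext fun k' ↦ ?_⟩
    simp only [Φ, LinearMap.pi_apply, innerₛₗ_apply_apply, real_inner_smul_right, hdual,
      Pi.basisFun_apply, Pi.single_apply]
    split_ifs
    · exact inv_mul_cancel₀ (by simpa using he0 k)
    · exact mul_zero _
  have hΦV : V ≤ LinearMap.ker Φ := fun x hx ↦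
    funext fun k ↦ horth (b.ne_zero k) (he k) (hV hx)
  simpa using Submodule.finrank_add_finrank_le_of_map_eq_top Φ hΦP hVP hΦV

noncomputable abbrev LinearMap.BilinForm.toInnerProductCore {E : Type*} [AddCommGroup E]
    [Module ℝ E] (β : LinearMap.BilinForm ℝ E) (hβ : β.IsSymm) (hpos : ∀ x, x ≠ 0 → 0 < β x x) :
    InnerProductSpace.Core ℝ E where
  inner x y := β x y
  conj_inner_symm x y := by simp [hβ.eq y x]
  re_inner_nonneg x := by
    rcases eq_or_ne x 0 with rfl | hx
    · simp
    · exact (hpos x hx).le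
  add_left := by simp
  smul_left := by simp
  definite x hx := by_contra fun h ↦ (hpos x h).ne' hx

section CartanDecomposition

variable {L : Type*} [LieRing L] [LieAlgebra ℝ L] {𝔨 𝔭 : Submodule ℝ L}

noncomputable def cartanInvolution (hcompl : IsCompl 𝔨 𝔭) : Module.End ℝ L :=
  𝔨.projection 𝔭 hcompl - 𝔭.projection 𝔨 hcompl.symm

/-- The inner product `-B(x, θ y)`, expanded as `B(x_𝔭, y_𝔭) - B(x_𝔨, y_𝔨)` so that it is
symmetric by construction. -/
noncomputable def cartanForm (hcompl : IsCompl 𝔨 𝔭) : LinearMap.BilinForm ℝ L :=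
  (killingForm ℝ L).compl₁₂ (𝔭.projection 𝔨 hcompl.symm) (𝔭.projection 𝔨 hcompl.symm) -
    (killingForm ℝ L).compl₁₂ (𝔨.projection 𝔭 hcompl) (𝔨.projection 𝔭 hcompl)

lemma sub_cartanInvolution_mem (hcompl : IsCompl 𝔨 𝔭) (x : L) :
    x - cartanInvolution hcompl x ∈ 𝔭 := by
  have hx := Submodule.projection_add_projection_eq_self hcompl x
  rw [cartanInvolution, LinearMap.sub_apply]
  convert 𝔭.add_mem (𝔭.projection_apply_mem hcompl.symm x)
    (𝔭.projection_apply_mem hcompl.symm x) using 1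
  nth_rw 1 [← hx]
  abel

lemma projection_lie_of_mem {hcompl : IsCompl 𝔨 𝔭} (hkp : ∀ x ∈ 𝔨, ∀ y ∈ 𝔭, ⁅x, y⁆ ∈ 𝔭)
    (hpp : ∀ x ∈ 𝔭, ∀ y ∈ 𝔭, ⁅x, y⁆ ∈ 𝔨) {p : L} (hp : p ∈ 𝔭) (x : L) :
    𝔭.projection 𝔨 hcompl.symm ⁅p, x⁆ = ⁅p, 𝔨.projection 𝔭 hcompl x⁆ ∧
      𝔨.projection 𝔭 hcompl ⁅p, x⁆ = ⁅p, 𝔭.projection 𝔨 hcompl.symm x⁆ := by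
  have h𝔨 : ⁅p, 𝔨.projection 𝔭 hcompl x⁆ ∈ 𝔭 := by
    rw [← lie_skew]
    exact 𝔭.neg_mem (hkp _ (Submodule.projection_apply_mem _ _) p hp)
  have h𝔭 : ⁅p, 𝔭.projection 𝔨 hcompl.symm x⁆ ∈ 𝔨 :=
    hpp p hp _ (Submodule.projection_apply_mem _ _)
  have hx : ⁅p, x⁆ = ⁅p, 𝔨.projection 𝔭 hcompl x⁆ + ⁅p, 𝔭.projection 𝔨 hcompl.symm x⁆ := by
    rw [← lie_add, Submodule.projection_add_projection_eq_self]
  rw [hx, map_add, map_add, Submodule.projection_apply_of_mem_left _ h𝔨,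
    Submodule.projection_apply_of_mem_left _ h𝔭, (Submodule.projection_apply_eq_zero_iff _).2 h𝔭,
    (Submodule.projection_apply_eq_zero_iff _).2 h𝔨]
  simp

lemma lie_cartanInvolution {hcompl : IsCompl 𝔨 𝔭} (hkp : ∀ x ∈ 𝔨, ∀ y ∈ 𝔭, ⁅x, y⁆ ∈ 𝔭)
    (hpp : ∀ x ∈ 𝔭, ∀ y ∈ 𝔭, ⁅x, y⁆ ∈ 𝔨) {p : L} (hp : p ∈ 𝔭) (x : L) :
    ⁅p, cartanInvolution hcompl x⁆ = -cartanInvolution hcompl ⁅p, x⁆ := by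
  obtain ⟨h𝔭, h𝔨⟩ := projection_lie_of_mem hkp hpp hp x
  rw [cartanInvolution, LinearMap.sub_apply, LinearMap.sub_apply, lie_sub, h𝔭, h𝔨, neg_sub]

lemma cartanForm_lie {hcompl : IsCompl 𝔨 𝔭} (hkp : ∀ x ∈ 𝔨, ∀ y ∈ 𝔭, ⁅x, y⁆ ∈ 𝔭)
    (hpp : ∀ x ∈ 𝔭, ∀ y ∈ 𝔭, ⁅x, y⁆ ∈ 𝔨) {p : L} (hp : p ∈ 𝔭) (x y : L) :
    cartanForm hcompl ⁅p, x⁆ y = cartanForm hcompl x ⁅p, y⁆ := by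
  obtain ⟨hx𝔭, hx𝔨⟩ := projection_lie_of_mem hkp hpp hp x
  obtain ⟨hy𝔭, hy𝔨⟩ := projection_lie_of_mem hkp hpp hp y
  simp only [cartanForm, LinearMap.sub_apply, LinearMap.compl₁₂_apply, hx𝔭, hx𝔨, hy𝔭, hy𝔨,
    LieModule.traceForm_apply_lie_apply']
  ring

lemma cartanForm_isSymm (hcompl : IsCompl 𝔨 𝔭) : (cartanForm hcompl).IsSymm :=
  ⟨fun x y ↦ by
    simp [cartanForm, LieModule.traceForm_comm ℝ L L (𝔭.projection _ _ x),
      LieModule.traceForm_comm ℝ L L (𝔨.projection _ _ x)]⟩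

lemma cartanForm_self_pos (hcompl : IsCompl 𝔨 𝔭)
    (hneg : ∀ x ∈ 𝔨, x ≠ 0 → killingForm ℝ L x x < 0)
    (hpos : ∀ x ∈ 𝔭, x ≠ 0 → 0 < killingForm ℝ L x x) {x : L} (hx : x ≠ 0) :
    0 < cartanForm hcompl x x := by
  set x𝔨 := 𝔨.projection 𝔭 hcompl x
  set x𝔭 := 𝔭.projection 𝔨 hcompl.symm x
  have h𝔨 : killingForm ℝ L x𝔨 x𝔨 ≤ 0 := by
    rcases eq_or_ne x𝔨 0 with h | h
    · simp [h]
    · exact (hneg _ (Submodule.projection_apply_mem _ _) h).le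
  have h𝔭 : 0 ≤ killingForm ℝ L x𝔭 x𝔭 := by
    rcases eq_or_ne x𝔭 0 with h | h
    · simp [h]
    · exact (hpos _ (Submodule.projection_apply_mem _ _) h).le
  change 0 < killingForm ℝ L x𝔭 x𝔭 - killingForm ℝ L x𝔨 x𝔨
  rcases eq_or_ne x𝔭 0 with h | h
  · have : x𝔨 ≠ 0 := fun h' ↦ hx <| by
      rw [← Submodule.projection_add_projection_eq_self hcompl x]
      change x𝔨 + x𝔭 = 0
      rw [h, h', add_zero]
    linarith [hneg _ (Submodule.projection_apply_mem _ _) this]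
  · linarith [hpos _ (Submodule.projection_apply_mem _ _) h]

lemma eq_zero_of_ad_eq_zero (hpos : ∀ x ∈ 𝔭, x ≠ 0 → 0 < killingForm ℝ L x x) {p : L}
    (hp : p ∈ 𝔭) (h : LieAlgebra.ad ℝ L p = 0) : p = 0 := by
  by_contra hne
  have := hpos p hp hne
  simp [killingForm_apply_apply, h] at this

theorem finrank_add_finrank_le_finrank_of_lie_eq_zero [Module.Finite ℝ L]
    (hcompl : IsCompl 𝔨 𝔭) (hkp : ∀ x ∈ 𝔨, ∀ y ∈ 𝔭, ⁅x, y⁆ ∈ 𝔭)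
    (hpp : ∀ x ∈ 𝔭, ∀ y ∈ 𝔭, ⁅x, y⁆ ∈ 𝔨) (hneg : ∀ x ∈ 𝔨, x ≠ 0 → killingForm ℝ L x x < 0)
    (hpos : ∀ x ∈ 𝔭, x ≠ 0 → 0 < killingForm ℝ L x x) {𝔟 V : Submodule ℝ L} (h𝔟 : 𝔟 ≤ 𝔭)
    (hV : V ≤ 𝔭) (h𝔟𝔟 : ∀ x ∈ 𝔟, ∀ y ∈ 𝔟, ⁅x, y⁆ = 0) (h𝔟V : ∀ x ∈ 𝔟, ∀ y ∈ V, ⁅x, y⁆ = 0) :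
    finrank ℝ 𝔟 + finrank ℝ V ≤ finrank ℝ 𝔭 := by
  set b := Module.finBasis ℝ 𝔟
  set T : Fin (finrank ℝ 𝔟) → Module.End ℝ L := fun i ↦ LieAlgebra.ad ℝ L (b i)
  have hb𝔭 i : (b i : L) ∈ 𝔭 := h𝔟 (b i).2
  have hT : LinearIndependent ℝ T :=
    b.linearIndependent.map' ((LieAlgebra.ad ℝ L : L →ₗ[ℝ] Module.End ℝ L) ∘ₗ 𝔟.subtype)
      (LinearMap.ker_eq_bot'.2 fun x hx ↦ Subtype.ext (eq_zero_of_ad_eq_zero hpos (h𝔟 x.2) hx))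
  have hcomm : Pairwise fun i j ↦ Commute (T i) (T j) := fun i j _ ↦ LinearMap.ext fun z ↦ by
    simp [T, leibniz_lie (b i : L) (b j : L) z, h𝔟𝔟 _ (b i).2 _ (b j).2]
  let core := (cartanForm hcompl).toInnerProductCore (cartanForm_isSymm hcompl)
    fun _ ↦ cartanForm_self_pos hcompl hneg hpos
  let : NormedAddCommGroup L := core.toNormedAddCommGroup
  let : InnerProductSpace ℝ L := .ofCore core.toCore
  simpa using card_add_finrank_le_finrank_of_anticommute (T := T)
    (fun i ↦ cartanForm_lie hkp hpp (hb𝔭 i)) hcomm hT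
    (fun i ↦ lie_cartanInvolution hkp hpp (hb𝔭 i)) (sub_cartanInvolution_mem hcompl) hV
    (fun x hx ↦ mem_jointEigenspace.2 fun i ↦ by simp [T, h𝔟V _ (b i).2 x hx])

end CartanDecomposition

namespace TensorProduct

variable {M N : Type*} [AddCommGroup M] [Module ℝ M] [AddCommGroup N] [Module ℝ N]

noncomputable def complexRe : ℂ ⊗[ℝ] M →ₗ[ℝ] M :=
  TensorProduct.lid ℝ M ∘ₗ Complex.reLm.rTensor M

noncomputable def complexIm : ℂ ⊗[ℝ] M →ₗ[ℝ] M :=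
  TensorProduct.lid ℝ M ∘ₗ Complex.imLm.rTensor M

@[simp] lemma complexRe_tmul (a : ℂ) (x : M) : complexRe (a ⊗ₜ[ℝ] x) = a.re • x := rfl

@[simp] lemma complexIm_tmul (a : ℂ) (x : M) : complexIm (a ⊗ₜ[ℝ] x) = a.im • x := rfl

lemma one_tmul_complexRe_add_I_tmul_complexIm (z : ℂ ⊗[ℝ] M) :
    (1 : ℂ) ⊗ₜ complexRe z + Complex.I ⊗ₜ complexIm z = z := by
  induction z using TensorProduct.induction_on with
  | zero => simp
  | tmul a x => simp [tmul_smul, smul_tmul', ← add_tmul]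
  | add z w hz hw =>
    simp only [map_add, tmul_add]
    rw [add_add_add_comm, hz, hw]

lemma eq_I_tmul_complexIm_of_complexRe_eq_zero {z : ℂ ⊗[ℝ] M} (hz : complexRe z = 0) :
    z = Complex.I ⊗ₜ complexIm z := by
  conv_lhs => rw [← one_tmul_complexRe_add_I_tmul_complexIm z, hz, tmul_zero, zero_add]

lemma complexRe_I_smul (z : ℂ ⊗[ℝ] M) : complexRe (Complex.I • z) = - complexIm z := by
  induction z using TensorProduct.induction_on with
  | zero => simp
  | tmul a x => simp [smul_tmul']
  | add z w hz hw => simp only [smul_add, map_add, hz, hw, neg_add]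

lemma complexIm_I_smul (z : ℂ ⊗[ℝ] M) : complexIm (Complex.I • z) = complexRe z := by
  induction z using TensorProduct.induction_on with
  | zero => simp
  | tmul a x => simp [smul_tmul']
  | add z w hz hw => simp only [smul_add, map_add, hz, hw]

lemma complexRe_baseChange (f : M →ₗ[ℝ] N) (z : ℂ ⊗[ℝ] M) :
    complexRe (f.baseChange ℂ z) = f (complexRe z) := by
  induction z using TensorProduct.induction_on with
  | zero => simp
  | tmul a x => simp
  | add z w hz hw => simp only [map_add, hz, hw]

end TensorProduct

namespace Submodule

open TensorProduct

variable {M : Type*} [AddCommGroup M] [Module ℝ M]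

noncomputable def realPart (𝔞 : Submodule ℂ (ℂ ⊗[ℝ] M)) : Submodule ℝ M :=
  (𝔞.restrictScalars ℝ).map complexRe

noncomputable def realPoints (𝔞 : Submodule ℂ (ℂ ⊗[ℝ] M)) : Submodule ℝ M :=
  (𝔞.restrictScalars ℝ).comap (TensorProduct.mk ℝ ℂ M 1)

variable {𝔞 : Submodule ℂ (ℂ ⊗[ℝ] M)}

lemma mem_realPoints {x : M} : x ∈ 𝔞.realPoints ↔ (1 : ℂ) ⊗ₜ[ℝ] x ∈ 𝔞 := Iff.rfl

lemma realPoints_le_realPart : 𝔞.realPoints ≤ 𝔞.realPart :=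
  fun x hx ↦ ⟨_, hx, by simp⟩

lemma realPart_le_of_le_baseChange {p : Submodule ℝ M} (h : 𝔞 ≤ p.baseChange ℂ) :
    𝔞.realPart ≤ p := by
  rintro _ ⟨z, hz, rfl⟩
  obtain ⟨w, rfl⟩ := h hz
  rw [complexRe_baseChange]
  exact (complexRe w).2

lemma finrank_real_eq_finrank_realPart_add_finrank_realPoints [Module.Finite ℝ M] :
    finrank ℝ 𝔞 = finrank ℝ 𝔞.realPart + finrank ℝ 𝔞.realPoints := by
  set f : 𝔞 →ₗ[ℝ] M := complexRe ∘ₗ 𝔞.subtype.restrictScalars ℝ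
  have hrange : LinearMap.range f = 𝔞.realPart := by
    rw [LinearMap.range_comp, realPart, LinearMap.range_restrictScalars, range_subtype]
  set j : LinearMap.ker f →ₗ[ℝ] M :=
    complexIm ∘ₗ 𝔞.subtype.restrictScalars ℝ ∘ₗ (LinearMap.ker f).subtype
  have hj : Function.Injective j := by
    intro z w hzw
    have hz := eq_I_tmul_complexIm_of_complexRe_eq_zero z.2
    have hw := eq_I_tmul_complexIm_of_complexRe_eq_zero w.2
    exact Subtype.ext (Subtype.ext (hz.trans ((congrArg _ hzw).trans hw.symm)))
  have hjrange : LinearMap.range j = 𝔞.realPoints := by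
    apply le_antisymm
    · rintro _ ⟨z, rfl⟩
      have h := eq_I_tmul_complexIm_of_complexRe_eq_zero z.2
      rw [mem_realPoints]
      convert 𝔞.smul_mem (-Complex.I) z.1.2 using 1
      change _ = -Complex.I • (𝔞.subtype.restrictScalars ℝ z.1)
      rw [h, smul_tmul', smul_eq_mul, neg_mul, Complex.I_mul_I, neg_neg]
      rfl
    · intro x hx
      refine ⟨⟨⟨Complex.I • (1 : ℂ) ⊗ₜ x, 𝔞.smul_mem _ hx⟩, ?_⟩, ?_⟩
      · simp [f, complexRe_I_smul]
      · simp [j, complexIm_I_smul]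
  have : Module.Finite ℝ 𝔞 := .trans ℂ 𝔞
  rw [← hrange, ← hjrange, LinearMap.finrank_range_of_inj hj,
    LinearMap.finrank_range_add_finrank_ker]

end Submodule

theorem TensorProduct.complexRe_lie_one_tmul {L : Type*} [LieRing L] [LieAlgebra ℝ L] (x : L)
    (z : ℂ ⊗[ℝ] L) : complexRe ⁅(1 : ℂ) ⊗ₜ[ℝ] x, z⁆ = ⁅x, complexRe z⁆ := by
  -- The bracket on `ℂ ⊗[ℝ] L` is elaborated as the module bracket, which `lie_zero` and `lie_add`
  -- only match after unfolding; hence the explicit `show`s.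
  induction z using TensorProduct.induction_on with
  | zero =>
    rw [show ⁅(1 : ℂ) ⊗ₜ[ℝ] x, (0 : ℂ ⊗[ℝ] L)⁆ = 0 from lie_zero ((1 : ℂ) ⊗ₜ[ℝ] x), map_zero,
      lie_zero]
  | tmul a y => simp [LieAlgebra.ExtendScalars.bracket_tmul]
  | add z w hz hw =>
    rw [show ⁅(1 : ℂ) ⊗ₜ[ℝ] x, z + w⁆ = ⁅(1 : ℂ) ⊗ₜ[ℝ] x, z⁆ + ⁅(1 : ℂ) ⊗ₜ[ℝ] x, w⁆ from
      lie_add ((1 : ℂ) ⊗ₜ[ℝ] x) z w, map_add, map_add, hz, hw, lie_add]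

lemma Submodule.lie_eq_zero_of_mem_realPoints_of_mem_realPart {L : Type*} [LieRing L]
    [LieAlgebra ℝ L] {𝔞 : Submodule ℂ (ℂ ⊗[ℝ] L)} (h𝔞 : ∀ X ∈ 𝔞, ∀ Y ∈ 𝔞, ⁅X, Y⁆ = 0) {x y : L}
    (hx : x ∈ 𝔞.realPoints) (hy : y ∈ 𝔞.realPart) : ⁅x, y⁆ = 0 := by
  obtain ⟨z, hz, rfl⟩ := hy
  rw [← TensorProduct.complexRe_lie_one_tmul, h𝔞 _ (mem_realPoints.1 hx) _ hz, map_zero]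

theorem carlson_toledo_dim_bound_general {L : Type*} [LieRing L] [LieAlgebra ℝ L]
    [Module.Finite ℝ L]
    (𝔨 𝔭 : Submodule ℝ L) (hcompl : IsCompl 𝔨 𝔭)
    (hkp : ∀ x ∈ 𝔨, ∀ y ∈ 𝔭, ⁅x, y⁆ ∈ 𝔭)
    (hpp : ∀ x ∈ 𝔭, ∀ y ∈ 𝔭, ⁅x, y⁆ ∈ 𝔨)
    (hneg : ∀ x ∈ 𝔨, x ≠ 0 → killingForm ℝ L x x < 0)
    (hpos : ∀ x ∈ 𝔭, x ≠ 0 → 0 < killingForm ℝ L x x)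
    (𝔞 : Submodule ℂ (ℂ ⊗[ℝ] L)) (h𝔞 : 𝔞 ≤ Submodule.baseChange ℂ 𝔭)
    (habel : ∀ X ∈ 𝔞, ∀ Y ∈ 𝔞, ⁅X, Y⁆ = (0 : ℂ ⊗[ℝ] L)) :
    2 * Module.finrank ℂ 𝔞 ≤ Module.finrank ℝ 𝔭 := by
  have hV : 𝔞.realPart ≤ 𝔭 := Submodule.realPart_le_of_le_baseChange h𝔞
  have h𝔟 : 𝔞.realPoints ≤ 𝔭 := Submodule.realPoints_le_realPart.trans hV
  have h𝔟V : ∀ x ∈ 𝔞.realPoints, ∀ y ∈ 𝔞.realPart, ⁅x, y⁆ = 0 := fun _ hx _ hy ↦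
    Submodule.lie_eq_zero_of_mem_realPoints_of_mem_realPart habel hx hy
  have h𝔟𝔟 : ∀ x ∈ 𝔞.realPoints, ∀ y ∈ 𝔞.realPoints, ⁅x, y⁆ = 0 := fun x hx y hy ↦
    h𝔟V x hx y (Submodule.realPoints_le_realPart hy)
  have hdim : 2 * finrank ℂ 𝔞 = finrank ℝ 𝔞 := by
    rw [← finrank_mul_finrank ℝ ℂ 𝔞, Complex.finrank_real_complex]
  have hbound := finrank_add_finrank_le_finrank_of_lie_eq_zero hcompl hkp hpp hneg hpos h𝔟 hV
    h𝔟𝔟 h𝔟V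
  rw [hdim, Submodule.finrank_real_eq_finrank_realPart_add_finrank_realPoints]
  omega

/-- **Carlson–Toledo dimension bound.** Let `𝔤 = 𝔨 ⊕ 𝔭` be a Cartan decomposition of a
finite-dimensional real Lie algebra whose Killing form is negative definite on `𝔨` and
positive definite on `𝔭`. Every abelian ℂ-subspace `𝔞` of `𝔭^ℂ ⊆ 𝔤^ℂ` satisfies
`dim_ℂ 𝔞 ≤ ½ dim_ℝ 𝔭`. -/
theorem carlson_toledo_dim_bound {L : Type*} [LieRing L] [LieAlgebra ℝ L]
    [Module.Finite ℝ L]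
    (𝔨 𝔭 : Submodule ℝ L) (hcompl : IsCompl 𝔨 𝔭)
    (hkk : ∀ x ∈ 𝔨, ∀ y ∈ 𝔨, ⁅x, y⁆ ∈ 𝔨)
    (hkp : ∀ x ∈ 𝔨, ∀ y ∈ 𝔭, ⁅x, y⁆ ∈ 𝔭)
    (hpp : ∀ x ∈ 𝔭, ∀ y ∈ 𝔭, ⁅x, y⁆ ∈ 𝔨)
    (hneg : ∀ x ∈ 𝔨, x ≠ 0 → killingForm ℝ L x x < 0)
    (hpos : ∀ x ∈ 𝔭, x ≠ 0 → 0 < killingForm ℝ L x x)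
    (𝔞 : Submodule ℂ (ℂ ⊗[ℝ] L)) (h𝔞 : 𝔞 ≤ Submodule.baseChange ℂ 𝔭)
    (habel : ∀ X ∈ 𝔞, ∀ Y ∈ 𝔞, ⁅X, Y⁆ = (0 : ℂ ⊗[ℝ] L)) :
    2 * Module.finrank ℂ 𝔞 ≤ Module.finrank ℝ 𝔭 :=
  carlson_toledo_dim_bound_general 𝔨 𝔭 hcompl hkp hpp hneg hpos 𝔞 h𝔞 habel
end

section
/- Let 𝔤 be a finite-dimensional real Lie algebra with Killing form B, and suppose 𝔤 = 𝔨 ⊕ 𝔭 is a direct sum of real subspaces with [𝔨,𝔨] ⊆ 𝔨, [𝔨,𝔭] ⊆ 𝔭, [𝔭,𝔭] ⊆ 𝔨, such that B is negative definite on 𝔨 and positive definite on 𝔭. Let B^ℂ be the ℂ-bilinear extension of B to 𝔤^ℂ and σ the conjugation of 𝔤^ℂ fixing 𝔤. Then for all X, Y ∈ 𝔭^ℂ, the number B^ℂ([X, Y], σ([X, Y])) is real and nonpositive, and it equals 0 if and only if [X, Y] = 0. -/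
/-!
Since `[𝔭, 𝔭] ⊆ 𝔨`, the bracket `Z = [X, Y]` lies in `𝔨^ℂ`, so `Z = a + i b` with `a, b ∈ 𝔨`
and `σ Z = a - i b`. By symmetry of `B` the cross terms cancel and
`B^ℂ(Z, σ Z) = B(a, a) + B(b, b)`, which is real, nonpositive, and zero only if `a = b = 0`
because `B` is negative definite on `𝔨`.
-/

open scoped TensorProduct

theorem lie_mem_baseChange {R A L : Type*} [CommRing R] [CommRing A] [Algebra R A]
    [LieRing L] [LieAlgebra R L] {p q r : Submodule R L} (h : ∀ x ∈ p, ∀ y ∈ q, ⁅x, y⁆ ∈ r)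
    {X Y : A ⊗[R] L} (hX : X ∈ p.baseChange A) (hY : Y ∈ q.baseChange A) :
    ⁅X, Y⁆ ∈ r.baseChange A := by
  have hle : Submodule.map₂ (LieModule.toEnd A (A ⊗[R] L) (A ⊗[R] L)) (p.baseChange A)
      (q.baseChange A) ≤ r.baseChange A := by
    rw [Submodule.baseChange_eq_span, Submodule.baseChange_eq_span, Submodule.map₂_span_span,
      Submodule.span_le]
    rintro _ ⟨_, ⟨x, hx, rfl⟩, _, ⟨y, hy, rfl⟩, rfl⟩
    simpa using r.tmul_mem_baseChange_of_mem (1 : A) (h x hx y hy)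
  exact hle (Submodule.apply_mem_map₂ _ hX hY)

section Complexification

variable {L : Type*} [AddCommGroup L] [Module ℝ L]

open Complex

theorem Complex.tmul_eq_one_tmul_add_I_tmul (z : ℂ) (x : L) :
    z ⊗ₜ[ℝ] x = (1 : ℂ) ⊗ₜ[ℝ] (z.re • x) + I ⊗ₜ[ℝ] (z.im • x) := by
  rw [← TensorProduct.smul_tmul, ← TensorProduct.smul_tmul, ← TensorProduct.add_tmul,
    real_smul, real_smul, mul_one, re_add_im]

theorem Submodule.exists_eq_one_tmul_add_I_tmul_of_mem_baseChange {p : Submodule ℝ L}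
    {W : ℂ ⊗[ℝ] L} (hW : W ∈ p.baseChange ℂ) :
    ∃ a ∈ p, ∃ b ∈ p, W = (1 : ℂ) ⊗ₜ[ℝ] a + I ⊗ₜ[ℝ] b := by
  rw [Submodule.baseChange_eq_span] at hW
  induction hW using Submodule.span_induction with
  | mem _ hx =>
    obtain ⟨a, ha, rfl⟩ := hx
    exact ⟨a, ha, 0, p.zero_mem, by simp⟩
  | zero => exact ⟨0, p.zero_mem, 0, p.zero_mem, by simp⟩
  | add _ _ _ _ hV hW =>
    obtain ⟨a, ha, b, hb, rfl⟩ := hV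
    obtain ⟨a', ha', b', hb', rfl⟩ := hW
    exact ⟨a + a', p.add_mem ha ha', b + b', p.add_mem hb hb', by
      simp only [TensorProduct.tmul_add]; abel⟩
  | smul c _ _ hW =>
    obtain ⟨a, ha, b, hb, rfl⟩ := hW
    refine ⟨c.re • a + (c * I).re • b, p.add_mem (p.smul_mem _ ha) (p.smul_mem _ hb),
      c.im • a + (c * I).im • b, p.add_mem (p.smul_mem _ ha) (p.smul_mem _ hb), ?_⟩
    rw [smul_add, TensorProduct.smul_tmul', TensorProduct.smul_tmul', smul_eq_mul, smul_eq_mul,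
      mul_one, tmul_eq_one_tmul_add_I_tmul c, tmul_eq_one_tmul_add_I_tmul (c * I),
      TensorProduct.tmul_add, TensorProduct.tmul_add]
    abel

theorem apply_conj_one_tmul_add_I_tmul {B : LinearMap.BilinForm ℝ L} (hB : B.IsSymm)
    {Bc : (ℂ ⊗[ℝ] L) →ₗ[ℂ] (ℂ ⊗[ℝ] L) →ₗ[ℂ] ℂ}
    (hBc : ∀ x y : L, Bc ((1 : ℂ) ⊗ₜ[ℝ] x) ((1 : ℂ) ⊗ₜ[ℝ] y) = (B x y : ℂ))
    {σ : (ℂ ⊗[ℝ] L) →ₗ[ℝ] (ℂ ⊗[ℝ] L)}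
    (hσ : ∀ (z : ℂ) (x : L), σ (z ⊗ₜ[ℝ] x) = (starRingEnd ℂ z) ⊗ₜ[ℝ] x) (a b : L) :
    Bc ((1 : ℂ) ⊗ₜ[ℝ] a + I ⊗ₜ[ℝ] b) (σ ((1 : ℂ) ⊗ₜ[ℝ] a + I ⊗ₜ[ℝ] b)) =
      ((B a a + B b b : ℝ) : ℂ) := by
  have hI : ∀ z : ℂ, z ⊗ₜ[ℝ] b = z • ((1 : ℂ) ⊗ₜ[ℝ] b) := fun z => by
    rw [TensorProduct.smul_tmul', smul_eq_mul, mul_one]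
  rw [map_add σ, hσ, hσ, map_one, conj_I, hI I, hI (-I)]
  simp only [map_add, map_smul, LinearMap.add_apply, LinearMap.smul_apply, hBc, smul_eq_mul,
    hB.eq b a]
  push_cast
  linear_combination (-(B b b : ℂ)) * I_sq

namespace LinearMap.BilinForm

variable {B : LinearMap.BilinForm ℝ L} {p : Submodule ℝ L} {x : L}

theorem apply_self_nonpos_of_neg_on (hneg : ∀ x ∈ p, x ≠ 0 → B x x < 0) (hx : x ∈ p) :
    B x x ≤ 0 := by
  rcases eq_or_ne x 0 with rfl | hx0
  · simp
  · exact (hneg x hx hx0).le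

theorem apply_self_eq_zero_iff_of_neg_on (hneg : ∀ x ∈ p, x ≠ 0 → B x x < 0) (hx : x ∈ p) :
    B x x = 0 ↔ x = 0 :=
  ⟨fun h => by_contra fun hx0 => (hneg x hx hx0).ne h, fun h => by simp [h]⟩

end LinearMap.BilinForm

end Complexification

theorem killing_bracket_conj_nonpos_general {L : Type*} [LieRing L] [LieAlgebra ℝ L]
    (𝔨 𝔭 : Submodule ℝ L)
    (hpp : ∀ x ∈ 𝔭, ∀ y ∈ 𝔭, ⁅x, y⁆ ∈ 𝔨)
    (hneg : ∀ x ∈ 𝔨, x ≠ 0 → killingForm ℝ L x x < 0)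
    (Bc : (ℂ ⊗[ℝ] L) →ₗ[ℂ] (ℂ ⊗[ℝ] L) →ₗ[ℂ] ℂ)
    (hBc : ∀ x y : L, Bc ((1 : ℂ) ⊗ₜ[ℝ] x) ((1 : ℂ) ⊗ₜ[ℝ] y) = (killingForm ℝ L x y : ℂ))
    (σ : (ℂ ⊗[ℝ] L) →ₗ[ℝ] (ℂ ⊗[ℝ] L))
    (hσ : ∀ (z : ℂ) (x : L), σ (z ⊗ₜ[ℝ] x) = (starRingEnd ℂ z) ⊗ₜ[ℝ] x)
    (X Y : ℂ ⊗[ℝ] L)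
    (hX : X ∈ Submodule.baseChange ℂ 𝔭) (hY : Y ∈ Submodule.baseChange ℂ 𝔭) :
    (Bc ⁅X, Y⁆ (σ ⁅X, Y⁆)).im = 0 ∧
    (Bc ⁅X, Y⁆ (σ ⁅X, Y⁆)).re ≤ 0 ∧
    (Bc ⁅X, Y⁆ (σ ⁅X, Y⁆) = 0 ↔ ⁅X, Y⁆ = (0 : ℂ ⊗[ℝ] L)) := by
  set B := killingForm ℝ L
  obtain ⟨a, ha, b, hb, hZ⟩ :=
    Submodule.exists_eq_one_tmul_add_I_tmul_of_mem_baseChange (lie_mem_baseChange hpp hX hY)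
  have hBZ : Bc ⁅X, Y⁆ (σ ⁅X, Y⁆) = ((B a a + B b b : ℝ) : ℂ) :=
    hZ ▸ apply_conj_one_tmul_add_I_tmul ⟨LieModule.traceForm_comm ℝ L L⟩ hBc hσ a b
  have haa := LinearMap.BilinForm.apply_self_nonpos_of_neg_on hneg ha
  have hbb := LinearMap.BilinForm.apply_self_nonpos_of_neg_on hneg hb
  refine ⟨by rw [hBZ, Complex.ofReal_im],
    by rw [hBZ, Complex.ofReal_re]; exact add_nonpos haa hbb,
    fun h0 => ?_, fun h0 => by rw [h0, map_zero, map_zero, LinearMap.zero_apply]⟩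
  rw [hBZ, Complex.ofReal_eq_zero] at h0
  have ha0 : a = 0 :=
    (LinearMap.BilinForm.apply_self_eq_zero_iff_of_neg_on hneg ha).1 (by linarith)
  have hb0 : b = 0 :=
    (LinearMap.BilinForm.apply_self_eq_zero_iff_of_neg_on hneg hb).1 (by linarith)
  rw [hZ, ha0, hb0, TensorProduct.tmul_zero, TensorProduct.tmul_zero, add_zero]

/-- Let `𝔤 = 𝔨 ⊕ 𝔭` be a Cartan decomposition of a finite-dimensional real Lie algebra
whose Killing form `B` is negative definite on `𝔨` and positive definite on `𝔭`. Let
`B^ℂ` be the ℂ-bilinear extension of `B` to `𝔤^ℂ` and `σ` the conjugation fixing `𝔤`.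
Then for `X, Y ∈ 𝔭^ℂ`, the number `B^ℂ([X,Y], σ([X,Y]))` is real and nonpositive, and
vanishes iff `[X,Y] = 0` (strongly nonpositive curvature of the symmetric space). -/
theorem killing_bracket_conj_nonpos {L : Type*} [LieRing L] [LieAlgebra ℝ L]
    [Module.Finite ℝ L]
    (𝔨 𝔭 : Submodule ℝ L) (hcompl : IsCompl 𝔨 𝔭)
    (hkk : ∀ x ∈ 𝔨, ∀ y ∈ 𝔨, ⁅x, y⁆ ∈ 𝔨)
    (hkp : ∀ x ∈ 𝔨, ∀ y ∈ 𝔭, ⁅x, y⁆ ∈ 𝔭)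
    (hpp : ∀ x ∈ 𝔭, ∀ y ∈ 𝔭, ⁅x, y⁆ ∈ 𝔨)
    (hneg : ∀ x ∈ 𝔨, x ≠ 0 → killingForm ℝ L x x < 0)
    (hpos : ∀ x ∈ 𝔭, x ≠ 0 → 0 < killingForm ℝ L x x)
    (Bc : (ℂ ⊗[ℝ] L) →ₗ[ℂ] (ℂ ⊗[ℝ] L) →ₗ[ℂ] ℂ)
    (hBc : ∀ x y : L, Bc ((1 : ℂ) ⊗ₜ[ℝ] x) ((1 : ℂ) ⊗ₜ[ℝ] y) = (killingForm ℝ L x y : ℂ))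
    (σ : (ℂ ⊗[ℝ] L) →ₗ[ℝ] (ℂ ⊗[ℝ] L))
    (hσ : ∀ (z : ℂ) (x : L), σ (z ⊗ₜ[ℝ] x) = (starRingEnd ℂ z) ⊗ₜ[ℝ] x)
    (X Y : ℂ ⊗[ℝ] L)
    (hX : X ∈ Submodule.baseChange ℂ 𝔭) (hY : Y ∈ Submodule.baseChange ℂ 𝔭) :
    (Bc ⁅X, Y⁆ (σ ⁅X, Y⁆)).im = 0 ∧
    (Bc ⁅X, Y⁆ (σ ⁅X, Y⁆)).re ≤ 0 ∧
    (Bc ⁅X, Y⁆ (σ ⁅X, Y⁆) = 0 ↔ ⁅X, Y⁆ = (0 : ℂ ⊗[ℝ] L)) :=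
  killing_bracket_conj_nonpos_general 𝔨 𝔭 hpp hneg Bc hBc σ hσ X Y hX hY
end

section
/- Let 𝔤 be a finite-dimensional real Lie algebra with Killing form B, and suppose 𝔤 = 𝔨 ⊕ 𝔭 is a direct sum of real subspaces with [𝔨,𝔨] ⊆ 𝔨, [𝔨,𝔭] ⊆ 𝔭, [𝔭,𝔭] ⊆ 𝔨, such that B is negative definite on 𝔨 and positive definite on 𝔭. If 𝔞 is a ℂ-linear subspace of 𝔭^ℂ ⊆ 𝔤^ℂ satisfying [𝔞, 𝔞] ⊆ 𝔞 (i.e. 𝔞 is a complex Lie subalgebra contained in 𝔭^ℂ), then [𝔞, 𝔞] = 0; that is, every complex Lie subalgebra of 𝔤^ℂ contained in 𝔭^ℂ is abelian. -/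
open scoped TensorProduct

/-!
Since `𝔞 ⊆ 𝔭^ℂ`, the bracket `[𝔞, 𝔞]` lies in `[𝔭^ℂ, 𝔭^ℂ] ⊆ 𝔨^ℂ`; since `𝔞` is a subalgebra, it
also lies in `𝔞 ⊆ 𝔭^ℂ`. Complexification preserves the direct sum `𝔤 = 𝔨 ⊕ 𝔭`, so
`𝔨^ℂ ∩ 𝔭^ℂ = 0`.
-/

namespace Submodule

theorem disjoint_baseChange_of_isCompl {R A M : Type*} [CommRing R] [Ring A] [Algebra R A]
    [AddCommGroup M] [Module R M] {p q : Submodule R M} (h : IsCompl p q) :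
    Disjoint (p.baseChange A) (q.baseChange A) := by
  rw [disjoint_def]
  rintro _ ⟨x, rfl⟩ ⟨y, hy⟩
  -- the base change of the projection onto `p` along `q` is the identity on `p^A`, zero on `q^A`
  have hp : (p.projectionOnto q h ∘ₗ p.subtype).baseChange A = .id := by
    rw [projectionOnto_comp_subtype, LinearMap.baseChange_id]
  have hq : (p.projectionOnto q h ∘ₗ q.subtype).baseChange A = 0 := by
    have : p.projectionOnto q h ∘ₗ q.subtype = 0 := LinearMap.ext (projectionOnto_apply_right h)
    rw [this, LinearMap.baseChange_zero]
  have hx : x = 0 := calc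
    x = (p.projectionOnto q h ∘ₗ p.subtype).baseChange A x := by rw [hp, LinearMap.id_apply]
    _ = (p.projectionOnto q h ∘ₗ q.subtype).baseChange A y := by
      simp only [LinearMap.baseChange_comp, LinearMap.comp_apply, hy]
    _ = 0 := by rw [hq, LinearMap.zero_apply]
  simp [hx]

theorem lie_mem_baseChange {R A L : Type*} [CommRing R] [CommRing A] [Algebra R A]
    [LieRing L] [LieAlgebra R L] {p q k : Submodule R L}
    (h : ∀ x ∈ p, ∀ y ∈ q, ⁅x, y⁆ ∈ k) {X Y : A ⊗[R] L}
    (hX : X ∈ p.baseChange A) (hY : Y ∈ q.baseChange A) : ⁅X, Y⁆ ∈ k.baseChange A := by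
  rw [baseChange_eq_span] at hX hY
  induction hX, hY using span_induction₂ with
  | mem_mem _ _ hx hy =>
    obtain ⟨x, hx, rfl⟩ := hx
    obtain ⟨y, hy, rfl⟩ := hy
    simpa using tmul_mem_baseChange_of_mem (1 : A) (h x hx y hy)
  | zero_left => simp
  | zero_right => simp
  | add_left _ _ _ _ _ _ h₁ h₂ => simpa [add_lie] using add_mem h₁ h₂
  | add_right _ _ _ _ _ _ h₁ h₂ => simpa [lie_add] using add_mem h₁ h₂
  | smul_left c _ _ _ _ hxy => simpa [smul_lie] using smul_mem _ c hxy
  | smul_right c _ _ _ _ hxy => simpa [lie_smul] using smul_mem _ c hxy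

end Submodule

theorem subalgebra_in_pC_is_abelian_general {L : Type*} [LieRing L] [LieAlgebra ℝ L]
    (𝔨 𝔭 : Submodule ℝ L) (hcompl : IsCompl 𝔨 𝔭)
    (hpp : ∀ x ∈ 𝔭, ∀ y ∈ 𝔭, ⁅x, y⁆ ∈ 𝔨)
    (𝔞 : Submodule ℂ (ℂ ⊗[ℝ] L)) (h𝔞 : 𝔞 ≤ Submodule.baseChange ℂ 𝔭)
    (hsub : ∀ X ∈ 𝔞, ∀ Y ∈ 𝔞, ⁅X, Y⁆ ∈ 𝔞) :
    ∀ X ∈ 𝔞, ∀ Y ∈ 𝔞, ⁅X, Y⁆ = (0 : ℂ ⊗[ℝ] L) := by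
  intro X hX Y hY
  have hk : ⁅X, Y⁆ ∈ Submodule.baseChange ℂ 𝔨 :=
    Submodule.lie_mem_baseChange hpp (h𝔞 hX) (h𝔞 hY)
  have hp : ⁅X, Y⁆ ∈ Submodule.baseChange ℂ 𝔭 := h𝔞 (hsub X hX Y hY)
  exact Submodule.disjoint_def.mp (Submodule.disjoint_baseChange_of_isCompl hcompl) _ hk hp

/-- Let `𝔤 = 𝔨 ⊕ 𝔭` be a Cartan decomposition of a finite-dimensional real Lie algebra
whose Killing form is negative definite on `𝔨` and positive definite on `𝔭`. Every
complex Lie subalgebra of `𝔤^ℂ` contained in `𝔭^ℂ` is abelian. -/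
theorem subalgebra_in_pC_is_abelian {L : Type*} [LieRing L] [LieAlgebra ℝ L]
    [Module.Finite ℝ L]
    (𝔨 𝔭 : Submodule ℝ L) (hcompl : IsCompl 𝔨 𝔭)
    (hkk : ∀ x ∈ 𝔨, ∀ y ∈ 𝔨, ⁅x, y⁆ ∈ 𝔨)
    (hkp : ∀ x ∈ 𝔨, ∀ y ∈ 𝔭, ⁅x, y⁆ ∈ 𝔭)
    (hpp : ∀ x ∈ 𝔭, ∀ y ∈ 𝔭, ⁅x, y⁆ ∈ 𝔨)
    (hneg : ∀ x ∈ 𝔨, x ≠ 0 → killingForm ℝ L x x < 0)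
    (hpos : ∀ x ∈ 𝔭, x ≠ 0 → 0 < killingForm ℝ L x x)
    (𝔞 : Submodule ℂ (ℂ ⊗[ℝ] L)) (h𝔞 : 𝔞 ≤ Submodule.baseChange ℂ 𝔭)
    (hsub : ∀ X ∈ 𝔞, ∀ Y ∈ 𝔞, ⁅X, Y⁆ ∈ 𝔞) :
    ∀ X ∈ 𝔞, ∀ Y ∈ 𝔞, ⁅X, Y⁆ = (0 : ℂ ⊗[ℝ] L) :=
  subalgebra_in_pC_is_abelian_general 𝔨 𝔭 hcompl hpp 𝔞 h𝔞 hsub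
end
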